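/- The two-variable generating function identity: 1 + Σ_{n≥1,m≥0} p_D(m,n) x^m q^n = 1 + Σ_{d≥1} Σ_{N≥0} s(d,N) / (q²;q²)_d, where p_D(m,n) is the number of Euclidean billiard partitions of n with weight-exponent m, (q²;q²)_d = ∏_{j=1}^{d}(1 - q^{2j}), and s(d,N) is the generating polynomial of irreducible Euclidean billiard partitions with d parts and largest part N. -/

import Mathlib

/-- A Euclidean billiard partition: a strictly decreasing list of positive
integers, whose smallest (last) part is even, and in which no two adjacent
parts are both odd. -/
def EBP (L : List ℕ) : Prop :=
  L ≠ [] ∧ (∀ m ∈ L, 0 < m) ∧ L.Chain' (· > ·) ∧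
    Even (L.getLastD 1) ∧ L.Chain' fun a b => ¬(Odd a ∧ Odd b)


/-- An irreducible Euclidean billiard partition: additionally the smallest
part equals 2 and adjacent parts differ by at most 2. -/
def IrrEBP (L : List ℕ) : Prop :=
  EBP L ∧ L.getLastD 1 = 2 ∧ L.Chain' fun a b => a ≤ b + 2

/-- The number of odd parts of a list. -/
def oddCount (L : List ℕ) : ℕ := (L.filter fun m => m % 2 = 1).length

/-- The weight exponent: `d - 1 - 2s` if the largest part is even and
`d - 2s` if it is odd, where `d` is the number of parts and `s` the number
of odd parts. -/
def wt (L : List ℕ) : ℕ :=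
  if L.headD 0 % 2 = 0 then L.length - 1 - 2 * oddCount L
  else L.length - 2 * oddCount L


/-- The number of Euclidean billiard partitions of `n` with weight exponent `m`. -/
noncomputable def pDW (m n : ℕ) : ℕ :=
  {L : List ℕ | EBP L ∧ L.sum = n ∧ wt L = m}.ncard

/-- `s(d, N)` as a formal power series in `q` with coefficients polynomials
in `x`: the sum of `x^{wt π} q^{|π|}` over irreducible Euclidean billiard
partitions `π` with `d` parts and largest part `N`. -/
noncomputable def sPS (d N : ℕ) : PowerSeries (Polynomial ℤ) :=
  ∑ᶠ L ∈ {L : List ℕ | IrrEBP L ∧ L.length = d ∧ L.headD 0 = N},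
    PowerSeries.monomial L.sum (Polynomial.X ^ wt L)

/-- `(q²; q²)_d = ∏_{j=1}^{d} (1 - q^{2j})`. -/
noncomputable def poch (d : ℕ) : PowerSeries (Polynomial ℤ) :=
  ∏ j ∈ Finset.range d, (1 - PowerSeries.X ^ (2 * (j + 1)))

/-!
Every Euclidean billiard partition `L` with `d` parts is, partwise, `P + 2 c` for a unique pair of
an irreducible partition `P` with `d` parts and a weakly decreasing sequence `c` of `d` naturals:
`P` is the irreducible partition with the parity pattern of `L`, and the gaps of `L` dominate those
of `P` because the gaps of `P` are the least ones that parity allows. The weight exponent only sees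
the parity pattern, so the generating function of partitions with `d` parts is that of irreducible
ones times `G_d = ∑_c q^{2|c|}`. Finally `G_d = 1 / (q²; q²)_d`, since removing a trailing zero of
`c`, or `1` from every entry when there is none, gives `G_{d+1} = G_d + q^{2(d+1)} G_{d+1}`.
-/

open PowerSeries

section Finsum

variable {α β M : Type*} [AddCommMonoid M]

theorem finsum_mem_fiberwise {s : Set α} {t : Set β} (hs : s.Finite) {f : α → β}
    (hf : Set.MapsTo f s t) (g : α → M) :
    ∑ᶠ b ∈ t, ∑ᶠ a ∈ {a ∈ s | f a = b}, g a = ∑ᶠ a ∈ s, g a := by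
  have hsupp : ∑ᶠ b ∈ t, ∑ᶠ a ∈ {a ∈ s | f a = b}, g a =
      ∑ᶠ b ∈ f '' s, ∑ᶠ a ∈ {a ∈ s | f a = b}, g a := by
    refine finsum_mem_inter_support_eq' _ _ _ fun b hb =>
      ⟨fun _ => ?_, fun ⟨a, ha, hab⟩ => hab ▸ hf ha⟩
    obtain ⟨a, ⟨ha, rfl⟩, -⟩ := exists_ne_zero_of_finsum_mem_ne_zero hb
    exact ⟨a, ha, rfl⟩
  have hunion : ⋃ b ∈ f '' s, {a ∈ s | f a = b} = s := by
    ext a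
    simpa using fun ha => ⟨a, ha, rfl⟩
  rw [hsupp, ← finsum_mem_biUnion _ (hs.image f) fun b _ => hs.subset (Set.sep_subset _ _),
    hunion]
  intro b₁ _ b₂ _ hne
  exact Set.disjoint_left.2 fun a ha₁ ha₂ => hne (ha₁.2.symm.trans ha₂.2)

theorem finsum_fiberwise {s : Set α} (hs : s.Finite) (f : α → β) (g : α → M) :
    ∑ᶠ b, ∑ᶠ a ∈ {a ∈ s | f a = b}, g a = ∑ᶠ a ∈ s, g a := by
  rw [← finsum_mem_univ, finsum_mem_fiberwise hs (Set.mapsTo_univ f s)]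

theorem finsum_mem_const_eq_ncard_smul (s : Set α) (c : M) : ∑ᶠ _ ∈ s, c = s.ncard • c := by
  rcases s.finite_or_infinite with hs | hs
  · rw [finsum_mem_eq_finite_toFinset_sum _ hs, Finset.sum_const, Set.ncard_eq_toFinset_card _ hs]
  · by_cases hc : c = 0
    · simp [hc]
    · rw [hs.ncard, zero_smul, finsum_mem_eq_zero_of_infinite]
      rwa [Function.support_const hc, Set.inter_univ]

theorem finsum_mem_mul_finsum_mem {R : Type*} [CommSemiring R] {s : Set α} {t : Set β}
    (hs : s.Finite) (ht : t.Finite) (f : α → R) (g : β → R) :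
    (∑ᶠ a ∈ s, f a) * ∑ᶠ b ∈ t, g b = ∑ᶠ x ∈ s ×ˢ t, f x.1 * g x.2 := by
  lift s to Finset α using hs
  lift t to Finset β using ht
  rw [← Finset.coe_product, finsum_mem_coe_finset, finsum_mem_coe_finset, finsum_mem_coe_finset,
    Finset.sum_mul_sum, Finset.sum_product]

theorem coeff_finsum_mem_mul {R : Type*} [CommSemiring R] {s : Set α} (hs : s.Finite)
    (F : α → PowerSeries R) (G : PowerSeries R) (n : ℕ) :
    coeff n ((∑ᶠ a ∈ s, F a) * G) = ∑ᶠ a ∈ s, coeff n (F a * G) :=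
  ((coeff n).toAddMonoidHom.comp (AddMonoidHom.mulRight G)).map_finsum_mem F hs

end Finsum

section GenFun

open Finset

variable {α β R : Type*} [CommSemiring R]

/-- A coefficient is the junk value `0` when its fibre is infinite, hence the finiteness
hypotheses below. -/
noncomputable def genFun (s : Set α) (g : α → ℕ) (w : α → R) : PowerSeries R :=
  PowerSeries.mk fun n => ∑ᶠ a ∈ {a ∈ s | g a = n}, w a

variable {s : Set α} {g : α → ℕ} {w : α → R}

theorem coeff_genFun (n : ℕ) : coeff n (genFun s g w) = ∑ᶠ a ∈ {a ∈ s | g a = n}, w a :=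
  coeff_mk _ _

theorem genFun_eq_finsum (hs : s.Finite) : genFun s g w = ∑ᶠ a ∈ s, monomial (g a) (w a) := by
  classical
  lift s to Finset α using hs
  ext n
  have hfib : {a ∈ (s : Set α) | g a = n} = ↑(s.filter (g · = n)) := by ext; simp
  rw [coeff_genFun, hfib, finsum_mem_coe_finset, finsum_mem_coe_finset, map_sum,
    Finset.sum_filter]
  simp only [coeff_monomial, eq_comm]

theorem genFun_mul {t : Set β} {h : β → ℕ} {v : β → R}
    (hs : ∀ n, {a ∈ s | g a = n}.Finite) (ht : ∀ n, {b ∈ t | h b = n}.Finite) :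
    genFun s g w * genFun t h v =
      genFun (s ×ˢ t) (fun x => g x.1 + h x.2) (fun x => w x.1 * v x.2) := by
  ext n
  have hfib : {x ∈ s ×ˢ t | g x.1 + h x.2 = n} =
      ⋃ p ∈ (antidiagonal n : Set (ℕ × ℕ)), {a ∈ s | g a = p.1} ×ˢ {b ∈ t | h b = p.2} := by
    ext ⟨a, b⟩
    simp only [Set.mem_ofPred_eq, Set.mem_prod, Set.mem_iUnion, Finset.mem_coe,
      HasAntidiagonal.mem_antidiagonal, exists_prop, Prod.exists]
    constructor
    · rintro ⟨⟨ha, hb⟩, rfl⟩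
      exact ⟨_, _, rfl, ⟨ha, rfl⟩, hb, rfl⟩
    · rintro ⟨_, _, rfl, ⟨ha, rfl⟩, hb, rfl⟩
      exact ⟨⟨ha, hb⟩, rfl⟩
  have hdisj : (antidiagonal n : Set (ℕ × ℕ)).PairwiseDisjoint
      fun p => {a ∈ s | g a = p.1} ×ˢ {b ∈ t | h b = p.2} := by
    intro p _ q _ hpq
    refine Set.disjoint_left.2 fun x hp hq => hpq (Prod.ext ?_ ?_)
    exacts [hp.1.2.symm.trans hq.1.2, hp.2.2.symm.trans hq.2.2]
  rw [coeff_mul, coeff_genFun, hfib, finsum_mem_biUnion hdisj (Finset.finite_toSet _)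
    fun p _ => (hs _).prod (ht _), finsum_mem_coe_finset]
  exact Finset.sum_congr rfl fun p _ => by
    rw [coeff_genFun, coeff_genFun, finsum_mem_mul_finsum_mem (hs _) (ht _)]

theorem genFun_union {t : Set α} (hst : Disjoint s t) (hs : ∀ n, {a ∈ s | g a = n}.Finite)
    (ht : ∀ n, {a ∈ t | g a = n}.Finite) :
    genFun (s ∪ t) g w = genFun s g w + genFun t g w := by
  ext n
  have hfib : {a ∈ s ∪ t | g a = n} = {a ∈ s | g a = n} ∪ {a ∈ t | g a = n} :=
    Set.ext fun _ => or_and_right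
  rw [map_add, coeff_genFun, coeff_genFun, coeff_genFun, hfib,
    finsum_mem_union (hst.mono (Set.sep_subset _ _) (Set.sep_subset _ _)) (hs n) (ht n)]

theorem genFun_image {e : β → α} {t : Set β} {g' : β → ℕ} (k : ℕ) (he : Set.InjOn e t)
    (hg : ∀ b ∈ t, g (e b) = g' b + k) :
    genFun (e '' t) g w = X ^ k * genFun t g' (w ∘ e) := by
  ext n
  have hfib : {a ∈ e '' t | g a = n} = e '' {b ∈ t | g (e b) = n} := by
    ext a
    constructor
    · rintro ⟨⟨b, hb, rfl⟩, hn⟩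
      exact ⟨b, ⟨hb, hn⟩, rfl⟩
    · rintro ⟨b, ⟨hb, hn⟩, rfl⟩
      exact ⟨⟨b, hb, rfl⟩, hn⟩
  rw [coeff_X_pow_mul', coeff_genFun, hfib, finsum_mem_image (he.mono (Set.sep_subset _ _))]
  split_ifs with hkn
  · rw [coeff_genFun]
    refine finsum_mem_congr (Set.ext fun b => and_congr_right fun hb => ?_) fun _ _ => rfl
    rw [hg b hb]
    omega
  · convert finsum_mem_empty
    exact Set.eq_empty_of_forall_notMem fun b ⟨hb, hn⟩ => hkn (by rw [hg b hb] at hn; omega)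

end GenFun

theorem List.finite_setOf_length_le_forall_le (a b : ℕ) :
    {L : List ℕ | L.length ≤ a ∧ ∀ x ∈ L, x ≤ b}.Finite := by
  refine ((List.finite_length_le (Fin (b + 1)) a).image (List.map Fin.val)).subset ?_
  rintro L ⟨hlen, hle⟩
  refine ⟨L.pmap (fun x hx => (⟨x, Nat.lt_succ_of_le hx⟩ : Fin (b + 1))) hle,
    by simpa using hlen, ?_⟩
  simp [List.map_pmap]

section AntitoneLists

open List

def antitoneLists (d : ℕ) : Set (List ℕ) := {c | c.length = d ∧ c.IsChain (· ≥ ·)}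

theorem finite_antitoneLists_sep {r : ℕ} (hr : 0 < r) (d j : ℕ) :
    {c ∈ antitoneLists d | r * c.sum = j}.Finite := by
  refine (finite_setOf_length_le_forall_le d j).subset ?_
  rintro c ⟨⟨hlen, -⟩, hsum⟩
  refine ⟨hlen.le, fun x hx => ?_⟩
  have := le_sum_of_mem hx
  nlinarith

theorem antitoneLists_zero : antitoneLists 0 = {[]} := by
  ext c
  simp only [antitoneLists, Set.mem_ofPred_eq, Set.mem_singleton_iff, length_eq_zero_iff,
    and_iff_left_iff_imp]
  rintro rfl
  exact isChain_nil

theorem antitoneLists_succ (d : ℕ) :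
    antitoneLists (d + 1) =
      (· ++ [0]) '' antitoneLists d ∪ map (· + 1) '' antitoneLists (d + 1) := by
  ext c
  constructor
  · rintro ⟨hlen, hc⟩
    rcases c.eq_nil_or_concat' with rfl | ⟨c, y, rfl⟩
    · simp at hlen
    have hy : ∀ x ∈ c ++ [y], y ≤ x := by
      have hc' := isChain_iff_pairwise.1 hc
      rw [pairwise_append] at hc'
      simp only [mem_singleton, forall_eq] at hc'
      intro x hx
      rcases mem_append.1 hx with hx | hx
      exacts [hc'.2.2 x hx, (mem_singleton.1 hx).ge]
    rcases Nat.eq_zero_or_pos y with rfl | hpos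
    · exact Or.inl ⟨c, ⟨by simpa using hlen, (isChain_append.1 hc).1⟩, rfl⟩
    · refine Or.inr ⟨(c ++ [y]).map (· - 1), ⟨by simpa using hlen, ?_⟩, ?_⟩
      · exact isChain_map _ |>.2 (hc.imp fun a b hab => Nat.sub_le_sub_right hab 1)
      · rw [map_map]
        conv_rhs => rw [← map_id (c ++ [y])]
        exact map_congr_left fun x hx => Nat.sub_add_cancel (hpos.trans_le (hy x hx))
  · rintro (⟨c, ⟨hlen, hc⟩, rfl⟩ | ⟨c, ⟨hlen, hc⟩, rfl⟩)
    · refine ⟨by simp [hlen], isChain_append.2 ⟨hc, isChain_singleton _, ?_⟩⟩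
      simp
    · exact ⟨by simp [hlen], isChain_map _ |>.2 (hc.imp fun a b hab => Nat.add_le_add_right hab 1)⟩

theorem disjoint_append_zero_image_map_succ_image (s t : Set (List ℕ)) :
    Disjoint ((· ++ [0]) '' s) (map (· + 1) '' t) := by
  refine Set.disjoint_left.2 ?_
  rintro _ ⟨c, -, rfl⟩ ⟨c', -, hc'⟩
  have : 0 ∈ map (· + 1) c' := hc' ▸ mem_append_right c (mem_singleton_self 0)
  simp at this

variable {R : Type*} {r : ℕ}

theorem genFun_antitoneLists_succ [CommSemiring R] (hr : 0 < r) (d : ℕ) :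
    genFun (antitoneLists (d + 1)) (fun c => r * c.sum) (fun _ => (1 : R)) =
      genFun (antitoneLists d) (fun c => r * c.sum) (fun _ => 1) +
        X ^ (r * (d + 1)) * genFun (antitoneLists (d + 1)) (fun c => r * c.sum) (fun _ => 1) := by
  have hfin : ∀ s ⊆ antitoneLists (d + 1), ∀ j, {c ∈ s | r * c.sum = j}.Finite :=
    fun s hs j => (finite_antitoneLists_sep hr (d + 1) j).subset fun c hc => ⟨hs hc.1, hc.2⟩
  conv_lhs => rw [antitoneLists_succ]
  rw [antitoneLists_succ] at hfin
  rw [genFun_union (disjoint_append_zero_image_map_succ_image _ _)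
    (hfin _ Set.subset_union_left) (hfin _ Set.subset_union_right)]
  congr 1
  · rw [genFun_image (g' := fun c => r * c.sum) 0 (append_left_injective [0]).injOn
      fun c _ => by simp, pow_zero, one_mul]
    rfl
  · rw [genFun_image (g' := fun c => r * c.sum) (r * (d + 1))
      (map_injective_iff.2 (add_left_injective 1)).injOn fun c hc => ?_]
    · rfl
    · simp [sum_map_add, hc.1, mul_add]

theorem prod_mul_genFun_antitoneLists [CommRing R] (hr : 0 < r) (d : ℕ) :
    (∏ i ∈ Finset.range d, (1 - X ^ (r * (i + 1)))) *
      genFun (antitoneLists d) (fun c => r * c.sum) (fun _ => (1 : R)) = 1 := by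
  induction d with
  | zero =>
    rw [Finset.prod_range_zero, one_mul, antitoneLists_zero,
      genFun_eq_finsum (Set.finite_singleton _), finsum_mem_singleton]
    simp
  | succ d ih =>
    rw [Finset.prod_range_succ, mul_assoc, sub_mul, one_mul,
      sub_eq_iff_eq_add.2 (genFun_antitoneLists_succ hr d), ih]

end AntitoneLists

section Chains

open List

theorem List.IsChain.zipWith {α β γ : Type*} {R₁ : α → α → Prop} {R₂ : β → β → Prop}
    {R : γ → γ → Prop} {f : α → β → γ}
    (hf : ∀ a a' b b', R₁ a a' → R₂ b b' → R (f a b) (f a' b')) :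
    ∀ {l₁ : List α} {l₂ : List β}, l₁.IsChain R₁ → l₂.IsChain R₂ → (zipWith f l₁ l₂).IsChain R
  | a :: a' :: l₁, b :: b' :: l₂, h₁, h₂ => by
    rw [isChain_cons_cons] at h₁ h₂
    rw [zipWith_cons_cons, zipWith_cons_cons, isChain_cons_cons, ← zipWith_cons_cons]
    exact ⟨hf _ _ _ _ h₁.1 h₂.1, h₁.2.zipWith hf h₂.2⟩
  | [], _, _, _ | [_], [], _, _ | [_], [_], _, _ | [_], _ :: _ :: _, _, _
  | _ :: _ :: _, [], _, _ | _ :: _ :: _, [_], _, _ => by simp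

theorem List.isChain_and_iff {α : Type*} {R S : α → α → Prop} {l : List α} :
    l.IsChain (fun a b => R a b ∧ S a b) ↔ l.IsChain R ∧ l.IsChain S := by
  induction l with
  | nil => simp
  | cons a l ih =>
    simp only [isChain_cons, ih]
    constructor
    · rintro ⟨h, hR, hS⟩
      exact ⟨⟨fun y hy => (h y hy).1, hR⟩, fun y hy => (h y hy).2, hS⟩
    · rintro ⟨⟨hR', hR⟩, hS', hS⟩
      exact ⟨fun y hy => ⟨hR' y hy, hS' y hy⟩, hR, hS⟩

theorem List.isChain_append_zero_gt_iff {L : List ℕ} :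
    (L ++ [0]).IsChain (· > ·) ↔ L.IsChain (· > ·) ∧ ∀ m ∈ L, 0 < m := by
  simp only [isChain_iff_pairwise, pairwise_append, pairwise_singleton, mem_singleton, forall_eq,
    true_and]

theorem List.le_two_mul_length_of_isChain {P : List ℕ}
    (h : (P ++ [0]).IsChain fun x y => y < x ∧ x ≤ y + 2) : ∀ x ∈ P, x ≤ 2 * P.length := by
  suffices ∀ x ∈ P ++ [0], x ≤ 2 * P.length from fun x hx => this x (mem_append_left _ hx)
  induction P with
  | nil => simp
  | cons a t ih =>
    obtain ⟨ha, ht⟩ := isChain_cons.1 h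
    obtain ⟨y, hy⟩ : ∃ y, (t ++ [0]).head? = some y := by cases t <;> simp
    have hya := ha y hy
    have hy_le := ih ht y (mem_of_mem_head? hy)
    intro x hx
    rcases mem_cons.1 hx with rfl | hx
    · simp only [length_cons]
      omega
    · have := ih ht x hx
      simp only [length_cons]
      omega

end Chains

namespace EBP

open List

def inflate (P c : List ℕ) : List ℕ := zipWith (fun p k => p + 2 * k) P c

def nextPart (p a : ℕ) : ℕ := if a % 2 = p % 2 then p + 2 else p + 1

/-- The irreducible partition with the parity pattern of `L`: from the smallest part upwards, each
part is the least number of the right parity above the previous one (`0` below the smallest). -/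
def reduce : List ℕ → List ℕ
  | [] => []
  | a :: t => nextPart ((reduce t).headD 0) a :: reduce t

def excess : List ℕ → List ℕ
  | [] => []
  | a :: t => (a - nextPart ((reduce t).headD 0) a) / 2 :: excess t

variable {P c L : List ℕ}

theorem length_inflate (h : P.length = c.length) : (inflate P c).length = P.length := by
  simp [inflate, h]

theorem sum_inflate (h : P.length = c.length) : (inflate P c).sum = P.sum + 2 * c.sum := by
  induction P generalizing c with
  | nil => cases c <;> simp_all [inflate]
  | cons p P ih =>
    cases c with
    | nil => simp at h
    | cons k c =>
      simp only [inflate, zipWith_cons_cons, sum_cons] at ih ⊢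
      rw [ih (by simpa using h)]
      ring

theorem map_mod_two_inflate (h : P.length = c.length) :
    (inflate P c).map (· % 2) = P.map (· % 2) := by
  induction P generalizing c with
  | nil => simp [inflate]
  | cons p P ih =>
    cases c with
    | nil => simp at h
    | cons k c =>
      simp only [inflate, zipWith_cons_cons, map_cons] at ih ⊢
      rw [ih (by simpa using h)]
      simp [Nat.add_mul_mod_self_left]

theorem isChain_inflate_append_zero (hP : (P ++ [0]).IsChain (· > ·)) (hc : c.IsChain (· ≥ ·))
    (h : P.length = c.length) : (inflate P c ++ [0]).IsChain (· > ·) := by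
  have hc0 : (c ++ [0]).IsChain (· ≥ ·) := isChain_append.2 ⟨hc, isChain_singleton _, by simp⟩
  have := hP.zipWith (f := fun p k => p + 2 * k) (R := (· > ·)) (fun _ _ _ _ ha hb => by omega) hc0
  rwa [zipWith_append h] at this

theorem headD_inflate (h : P.length = c.length) :
    (inflate P c).headD 0 = P.headD 0 + 2 * c.headD 0 := by
  cases P <;> cases c <;> simp_all [inflate]

@[simp]
theorem length_reduce (L : List ℕ) : (reduce L).length = L.length := by
  induction L with
  | nil => rfl
  | cons a t ih => simp [reduce, ih]

@[simp]
theorem length_excess (L : List ℕ) : (excess L).length = L.length := by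
  induction L with
  | nil => rfl
  | cons a t ih => simp [excess, ih]

theorem nextPart_mod_two (p a : ℕ) : nextPart p a % 2 = a % 2 := by
  unfold nextPart
  split_ifs <;> omega

theorem nextPart_add_two_mul {p q : ℕ} (h : p < q ∧ q ≤ p + 2) (k : ℕ) :
    nextPart p (q + 2 * k) = q := by
  unfold nextPart
  split_ifs <;> omega

theorem map_mod_two_reduce (L : List ℕ) : (reduce L).map (· % 2) = L.map (· % 2) := by
  induction L with
  | nil => rfl
  | cons a t ih => simp only [reduce, map_cons, nextPart_mod_two, ih]

theorem isChain_reduce_append_zero (L : List ℕ) :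
    (reduce L ++ [0]).IsChain fun x y => y < x ∧ x ≤ y + 2 := by
  induction L with
  | nil => simp [reduce]
  | cons a t ih =>
    refine isChain_cons.2 ⟨fun y hy => ?_, ih⟩
    have : y = (reduce t).headD 0 := by cases h : reduce t <;> simp_all
    subst this
    unfold nextPart
    split_ifs <;> omega

theorem inflate_reduce_excess (hL : (L ++ [0]).IsChain (· > ·)) :
    inflate (reduce L) (excess L) = L := by
  induction L with
  | nil => rfl
  | cons a t ih =>
    obtain ⟨ha, ht⟩ := isChain_cons.1 hL
    have ht' := ih ht
    have hhead := headD_inflate (P := reduce t) (c := excess t) (by simp)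
    rw [ht'] at hhead
    have hat : t.headD 0 < a := ha (t.headD 0) (by cases t <;> simp)
    simp only [reduce, excess, inflate, zipWith_cons_cons] at ht' ⊢
    rw [ht']
    congr 1
    unfold nextPart
    split_ifs <;> omega

theorem isChain_excess (hL : (L ++ [0]).IsChain (· > ·)) : (excess L).IsChain (· ≥ ·) := by
  induction L with
  | nil => simp [excess]
  | cons a t ih =>
    obtain ⟨ha, ht⟩ := isChain_cons.1 hL
    have hhead := headD_inflate (P := reduce t) (c := excess t) (by simp)
    rw [inflate_reduce_excess ht] at hhead
    have hat : t.headD 0 < a := ha (t.headD 0) (by cases t <;> simp)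
    refine isChain_cons.2 ⟨fun y hy => ?_, ih ht⟩
    have : y = (excess t).headD 0 := by cases h : excess t <;> simp_all
    subst this
    unfold nextPart
    split_ifs <;> omega

theorem reduce_inflate (hP : (P ++ [0]).IsChain fun x y => y < x ∧ x ≤ y + 2)
    (h : P.length = c.length) : reduce (inflate P c) = P := by
  induction P generalizing c with
  | nil => simp [inflate, reduce]
  | cons q P ih =>
    cases c with
    | nil => simp at h
    | cons k c =>
      obtain ⟨hq, hP⟩ := isChain_cons.1 hP
      have hqP := hq (P.headD 0) (by cases P <;> simp)
      have ih' := ih hP (by simpa using h)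
      simp only [inflate, zipWith_cons_cons, reduce] at ih' ⊢
      rw [ih', nextPart_add_two_mul hqP]

theorem excess_inflate (hP : (P ++ [0]).IsChain fun x y => y < x ∧ x ≤ y + 2)
    (h : P.length = c.length) : excess (inflate P c) = c := by
  induction P generalizing c with
  | nil => cases c <;> simp_all [inflate, excess]
  | cons q P ih =>
    cases c with
    | nil => simp at h
    | cons k c =>
      obtain ⟨hq, hP'⟩ := isChain_cons.1 hP
      have hqP := hq (P.headD 0) (by cases P <;> simp)
      have ih' := ih hP' (by simpa using h)
      have hred := reduce_inflate hP' (c := c) (by simpa using h)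
      simp only [inflate, zipWith_cons_cons, excess] at ih' hred ⊢
      rw [ih', hred, nextPart_add_two_mul hqP]
      simp

end EBP

section Parity

variable {L M P : List ℕ}

theorem EBP.isChain_append_zero (h : EBP L) : (L ++ [0]).IsChain (· > ·) :=
  List.isChain_append_zero_gt_iff.2 ⟨h.2.2.1, h.2.1⟩

theorem even_getLastD_iff_of_map_mod_two_eq (h : L.map (· % 2) = M.map (· % 2)) :
    Even (L.getLastD 1) ↔ Even (M.getLastD 1) := by
  have key : ∀ K : List ℕ, K.getLastD 1 % 2 = (K.map (· % 2)).getLastD 1 := fun K => by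
    simp only [List.getLastD_eq_getLast?, List.getLast?_map]
    cases K.getLast? <;> simp
  rw [Nat.even_iff, Nat.even_iff, key, key, h]

theorem isChain_not_odd_iff_of_map_mod_two_eq (h : L.map (· % 2) = M.map (· % 2)) :
    L.IsChain (fun a b => ¬(Odd a ∧ Odd b)) ↔ M.IsChain (fun a b => ¬(Odd a ∧ Odd b)) := by
  have key : ∀ K : List ℕ, K.IsChain (fun a b => ¬(Odd a ∧ Odd b)) ↔
      (K.map (· % 2)).IsChain (fun a b => ¬(a = 1 ∧ b = 1)) := fun K => by
    simp only [List.isChain_map, Nat.odd_iff]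
  rw [key, key, h]

theorem EBP.of_map_mod_two_eq (hM : EBP M) (h : L.map (· % 2) = M.map (· % 2))
    (hL : (L ++ [0]).IsChain (· > ·)) : EBP L := by
  obtain ⟨hchain, hpos⟩ := List.isChain_append_zero_gt_iff.1 hL
  refine ⟨?_, hpos, hchain, (even_getLastD_iff_of_map_mod_two_eq h).2 hM.2.2.2.1,
    (isChain_not_odd_iff_of_map_mod_two_eq h).2 hM.2.2.2.2⟩
  rw [← List.length_pos_iff, ← List.length_map (f := (· % 2)), h, List.length_map]
  exact List.length_pos_iff.2 hM.1

theorem wt_eq_of_map_mod_two_eq (h : L.map (· % 2) = M.map (· % 2)) : wt L = wt M := by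
  have hlen : L.length = M.length := by simpa using congrArg List.length h
  have hodd : oddCount L = oddCount M := by
    have := congrArg (List.countP (· = 1)) h
    simp only [List.countP_map, Function.comp_def] at this
    simpa only [oddCount, ← List.countP_eq_length_filter] using this
  have hhead : L.headD 0 % 2 = M.headD 0 % 2 := by
    have := congrArg (List.headD · 0) h
    cases L <;> cases M <;> simp_all
  unfold wt
  rw [hlen, hodd, hhead]

theorem irrEBP_iff :
    IrrEBP P ↔ EBP P ∧ (P ++ [0]).IsChain fun x y => y < x ∧ x ≤ y + 2 := by
  unfold IrrEBP
  simp only [List.isChain_append, List.isChain_singleton, List.head?_cons, Option.mem_def,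
    Option.some.injEq, forall_eq', true_and, List.isChain_and_iff]
  constructor
  · rintro ⟨hE, hlast, hle⟩
    refine ⟨hE, ⟨hE.2.2.1, hle⟩, fun x hx => ?_⟩
    rw [List.getLastD_eq_getLast?, hx] at hlast
    simp only [Option.getD_some] at hlast
    omega
  · rintro ⟨hE, ⟨-, hle⟩, hlast⟩
    refine ⟨hE, ?_, hle⟩
    obtain ⟨x, hx⟩ := Option.ne_none_iff_exists'.1 (List.getLast?_eq_none_iff.not.2 hE.1)
    have heven := hE.2.2.2.1
    rw [List.getLastD_eq_getLast?, hx] at heven ⊢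
    simp only [Option.getD_some, Nat.even_iff] at heven ⊢
    have := hlast x hx
    omega

end Parity

section Decomposition

open EBP

variable {L P c : List ℕ}

theorem EBP.irrEBP_reduce (h : EBP L) : IrrEBP (reduce L) := by
  have hgap := isChain_reduce_append_zero L
  exact irrEBP_iff.2 ⟨h.of_map_mod_two_eq (map_mod_two_reduce L) (hgap.imp fun _ _ h => h.1), hgap⟩

theorem IrrEBP.ebp_inflate (hP : IrrEBP P) (hc : c.IsChain (· ≥ ·)) (h : P.length = c.length) :
    EBP (inflate P c) :=
  hP.1.of_map_mod_two_eq (map_mod_two_inflate h)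
    (isChain_inflate_append_zero hP.1.isChain_append_zero hc h)

theorem bijOn_inflate (d n : ℕ) :
    Set.BijOn (fun x : List ℕ × List ℕ => inflate x.1 x.2)
      {x ∈ {P | IrrEBP P ∧ P.length = d} ×ˢ antitoneLists d | x.1.sum + 2 * x.2.sum = n}
      {L ∈ {L | EBP L ∧ L.sum = n} | L.length = d} := by
  refine Set.InvOn.bijOn (f' := fun L => (reduce L, excess L)) ⟨?_, ?_⟩ ?_ ?_
  · rintro ⟨P, c⟩ ⟨⟨⟨hP, hPlen⟩, hclen, -⟩, -⟩
    have hgap := (irrEBP_iff.1 hP).2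
    exact Prod.ext (reduce_inflate hgap (hPlen.trans hclen.symm))
      (excess_inflate hgap (hPlen.trans hclen.symm))
  · rintro L ⟨⟨hL, -⟩, -⟩
    exact inflate_reduce_excess hL.isChain_append_zero
  · rintro ⟨P, c⟩ ⟨⟨⟨hP, hPlen⟩, hclen, hc⟩, hsum⟩
    have hlen := hPlen.trans hclen.symm
    exact ⟨⟨hP.ebp_inflate hc hlen, (sum_inflate hlen).trans hsum⟩,
      (length_inflate hlen).trans hPlen⟩
  · rintro L ⟨⟨hL, hsum⟩, hlen⟩
    have hchain := hL.isChain_append_zero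
    refine ⟨⟨⟨hL.irrEBP_reduce, by simp [hlen]⟩, by simp [hlen], isChain_excess hchain⟩, ?_⟩
    rw [← sum_inflate (by simp), inflate_reduce_excess hchain, hsum]

end Decomposition

theorem finite_setOf_ebp_sum (n : ℕ) : {L | EBP L ∧ L.sum = n}.Finite := by
  refine (List.finite_setOf_length_le_forall_le n n).subset ?_
  rintro L ⟨hL, rfl⟩
  exact ⟨L.length_le_sum_of_one_le hL.2.1, fun x hx => List.le_sum_of_mem hx⟩

theorem finite_setOf_irrEBP_length (d : ℕ) : {P | IrrEBP P ∧ P.length = d}.Finite := by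
  refine (List.finite_setOf_length_le_forall_le d (2 * d)).subset ?_
  rintro P ⟨hP, rfl⟩
  exact ⟨le_rfl, List.le_two_mul_length_of_isChain (irrEBP_iff.1 hP).2⟩

theorem coeff_genFun_irrEBP_mul_genFun_antitoneLists (d n : ℕ) :
    coeff n (genFun {P | IrrEBP P ∧ P.length = d} List.sum (fun P => Polynomial.X ^ wt P) *
        genFun (antitoneLists d) (fun c => 2 * c.sum) (fun _ => (1 : Polynomial ℤ))) =
      ∑ᶠ L ∈ {L ∈ {L | EBP L ∧ L.sum = n} | L.length = d}, Polynomial.X ^ wt L := by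
  rw [genFun_mul (fun _ => (finite_setOf_irrEBP_length d).subset (Set.sep_subset _ _))
    (finite_antitoneLists_sep two_pos d), coeff_genFun]
  refine finsum_mem_eq_of_bijOn _ (bijOn_inflate d n)
    fun ⟨P, c⟩ ⟨⟨⟨_, hPlen⟩, hclen, _⟩, _⟩ => ?_
  rw [mul_one, wt_eq_of_map_mod_two_eq (EBP.map_mod_two_inflate (hPlen.trans hclen.symm))]

theorem invOfUnit_poch (d : ℕ) :
    invOfUnit (poch d) 1 = genFun (antitoneLists d) (fun c => 2 * c.sum) (fun _ => 1) := by
  have hpoch : genFun (antitoneLists d) (fun c => 2 * c.sum) (fun _ => 1) * poch d = 1 := by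
    rw [mul_comm]
    exact prod_mul_genFun_antitoneLists two_pos d
  refine (left_inv_eq_right_inv hpoch (mul_invOfUnit _ _ ?_)).symm
  simp [poch, map_prod]

theorem finsum_coeff_sPS_mul_invOfUnit_poch (d n : ℕ) :
    ∑ᶠ N, coeff n (sPS d N * invOfUnit (poch d) 1) =
      ∑ᶠ L ∈ {L ∈ {L | EBP L ∧ L.sum = n} | L.length = d}, Polynomial.X ^ wt L := by
  have hI := finite_setOf_irrEBP_length d
  have hsPS : ∀ N, sPS d N = ∑ᶠ P ∈ {P ∈ {P | IrrEBP P ∧ P.length = d} | P.headD 0 = N},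
      monomial P.sum (Polynomial.X ^ wt P) := fun N => by
    rw [sPS, Set.ext fun _ => and_assoc.symm]
    rfl
  simp_rw [hsPS, coeff_finsum_mem_mul (hI.subset (Set.sep_subset _ _))]
  rw [finsum_fiberwise hI, ← coeff_finsum_mem_mul hI, ← genFun_eq_finsum hI, invOfUnit_poch,
    coeff_genFun_irrEBP_mul_genFun_antitoneLists]

theorem C_pDW_mul_X_pow (m n : ℕ) :
    Polynomial.C (pDW m n : ℤ) * Polynomial.X ^ m =
      ∑ᶠ L ∈ {L ∈ {L | EBP L ∧ L.sum = n} | wt L = m}, Polynomial.X ^ wt L := by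
  have hset : {L | EBP L ∧ L.sum = n ∧ wt L = m} = {L ∈ {L | EBP L ∧ L.sum = n} | wt L = m} :=
    Set.ext fun _ => and_assoc.symm
  rw [pDW, hset, finsum_mem_congr rfl fun L hL => by rw [hL.2], finsum_mem_const_eq_ncard_smul,
    nsmul_eq_mul, ← Polynomial.C_eq_natCast]

/-- The generating-function identity
`1 + Σ_{n≥1,m≥0} p_D(m,n) x^m q^n = 1 + Σ_{d≥1} Σ_{N≥0} s(d,N)/(q²;q²)_d`,
stated coefficientwise in `q`. -/
theorem weighted_generating_function :
    ∀ n : ℕ,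
      (∑ᶠ m : ℕ, Polynomial.C (pDW m n : ℤ) * Polynomial.X ^ m) =
        ∑ᶠ d ∈ Set.Ici 1, ∑ᶠ N : ℕ,
          PowerSeries.coeff n
            (sPS d N * PowerSeries.invOfUnit (poch d) 1) := by
  intro n
  have hA := finite_setOf_ebp_sum n
  have hlen : Set.MapsTo List.length {L | EBP L ∧ L.sum = n} (Set.Ici 1) :=
    fun L hL => List.length_pos_iff.2 hL.1.1
  simp_rw [C_pDW_mul_X_pow, finsum_coeff_sPS_mul_invOfUnit_poch]
  rw [finsum_fiberwise hA, finsum_mem_fiberwise hA hlen]
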